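/- arXiv:2412.05931 — 5 statements merged into one kernel-verified Lean document; each statement's English description precedes it below -/
import Mathlib

section
/- Assume 0 < p < 1. Let (x̄*, ȳ*) be the element of minimal norm of Ω and, for each t ≥ t₀ > 0, let (x_t, y_t) be the unique saddle point of L_t. Then lim_{t→+∞} ‖(x_t, y_t) − (x̄*, ȳ*)‖ = 0, and ‖(x_t, y_t)‖ ≤ ‖(x̄*, ȳ*)‖ for all t ≥ t₀. -/
open Real Set Filter MeasureTheory
open scoped RealInnerProductSpace

noncomputable section

abbrev Euc (n : ℕ) : Type := EuclideanSpace ℝ (Fin n)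

/-- The Lagrangian `L(x,y) = f(x) + ⟨Kx, y⟩ − g(y)`. -/
def Lag {n m : ℕ} (f : Euc n → ℝ) (g : Euc m → ℝ) (K : Euc n →L[ℝ] Euc m)
    (x : Euc n) (y : Euc m) : ℝ :=
  f x + ⟪K x, y⟫ - g y

/-- The augmented Lagrangian `L_t(x,y) = L(x,y) + (c/(2 t^p)) (‖x‖² − ‖y‖²)`. -/
def LagT {n m : ℕ} (f : Euc n → ℝ) (g : Euc m → ℝ) (K : Euc n →L[ℝ] Euc m)
    (c p : ℝ) (t : ℝ) (x : Euc n) (y : Euc m) : ℝ :=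
  Lag f g K x y + (c / (2 * t ^ p)) * (‖x‖ ^ 2 - ‖y‖ ^ 2)

/-- `∇_x L_t(x,y) = ∇f(x) + K* y + (c/t^p) x`. -/
def gradLx {n m : ℕ} (f : Euc n → ℝ) (K : Euc n →L[ℝ] Euc m)
    (c p : ℝ) (t : ℝ) (x : Euc n) (y : Euc m) : Euc n :=
  gradient f x + (ContinuousLinearMap.adjoint K) y + (c / t ^ p) • x

/-- `∇_y L_t(x,y) = −∇g(y) + K x − (c/t^p) y`. -/
def gradLy {n m : ℕ} (g : Euc m → ℝ) (K : Euc n →L[ℝ] Euc m)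
    (c p : ℝ) (t : ℝ) (x : Euc n) (y : Euc m) : Euc m :=
  -(gradient g y) + K x - (c / t ^ p) • y

/-- The extrapolation coefficient `θ(t)`. -/
def theta (α q γ s t : ℝ) : ℝ :=
  (t ^ (2*q+s) - 2*γ*q * t ^ (2*q-1) + γ * t ^ q) /
    ((α - 1) * (t ^ (q+s) - γ*q * t ^ (q-1)))

/-- `(xs, ys)` is a saddle point of `L`. -/
def IsSaddle {n m : ℕ} (L : Euc n → Euc m → ℝ) (xs : Euc n) (ys : Euc m) : Prop :=
  ∀ x : Euc n, ∀ y : Euc m, L xs y ≤ L xs ys ∧ L xs ys ≤ L x ys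

/-- A global solution of the dynamical system (dyn), recorded together with its first and
second derivatives `x', y', x'', y''` and the derivatives `Gx', Gy'` of the Hessian-driven
damping terms `t ↦ ∇_x L_t(x(t), y(t)+θ(t) y'(t))` and `t ↦ ∇_y L_t(x(t)+θ(t) x'(t), y(t))`. -/
structure IsDynSol {n m : ℕ} (f : Euc n → ℝ) (g : Euc m → ℝ) (K : Euc n →L[ℝ] Euc m)
    (c p α q γ s t₀ : ℝ) (x : ℝ → Euc n) (y : ℝ → Euc m)
    (x' x'' Gx' : ℝ → Euc n) (y' y'' Gy' : ℝ → Euc m) : Prop where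
  hx' : ∀ t ≥ t₀, HasDerivAt x (x' t) t
  hy' : ∀ t ≥ t₀, HasDerivAt y (y' t) t
  hx'' : ∀ t ≥ t₀, HasDerivAt x' (x'' t) t
  hy'' : ∀ t ≥ t₀, HasDerivAt y' (y'' t) t
  hx''c : ContinuousOn x'' (Ici t₀)
  hy''c : ContinuousOn y'' (Ici t₀)
  hGx' : ∀ t ≥ t₀, HasDerivAt
    (fun τ => gradLx f K c p τ (x τ) (y τ + theta α q γ s τ • y' τ)) (Gx' t) t
  hGy' : ∀ t ≥ t₀, HasDerivAt
    (fun τ => gradLy g K c p τ (x τ + theta α q γ s τ • x' τ) (y τ)) (Gy' t) t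
  heqx : ∀ t ≥ t₀, x'' t + (α / t ^ q) • x' t + γ • Gx' t
      + t ^ s • gradLx f K c p t (x t) (y t + theta α q γ s t • y' t) = 0
  heqy : ∀ t ≥ t₀, y'' t + (α / t ^ q) • y' t - γ • Gy' t
      - t ^ s • gradLy g K c p t (x t + theta α q γ s t • x' t) (y t) = 0

/-- The coefficient `a(t)`. -/
def aFun (α q γ s t : ℝ) : ℝ :=
  (2*q+s) * t ^ (2*q+s-1) - 2*γ*q*(2*q-1) * t ^ (2*q-2) + γ*q * t ^ (q-1)
    + (α-1) * (γ*q * t ^ (q-1) - t ^ (q+s))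

/-- The coefficient `l(t)` (depending on the constant `M`). -/
def lFun (α q c γ s p M t : ℝ) : ℝ :=
  M*(α-1)*(3*α-2)/2 * t ^ (-q) + (α-1)*c*γ/8 * t ^ (-p)
    - M*(α-1)*q/2 * t ^ (-1 : ℝ) - (α-1)*c/4 * t ^ (q+s-p)
    + (α-1)*c*γ*q/4 * t ^ (q-1-p) - (α-1)*q*c/(8*α) * t ^ (2*q+s-1-p)
    + (α-1)*q*(1-q)/2 * t ^ (q-2)

/-- `Δ(t) = ‖∇_x L_t(x(t), y(t)+θ(t)ẏ(t))‖² + ‖∇_y L_t(x(t)+θ(t)ẋ(t), y(t))‖²`. -/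
def DeltaFun {n m : ℕ} (f : Euc n → ℝ) (g : Euc m → ℝ) (K : Euc n →L[ℝ] Euc m)
    (c p α q γ s : ℝ) (x x' : ℝ → Euc n) (y y' : ℝ → Euc m) (t : ℝ) : ℝ :=
  ‖gradLx f K c p t (x t) (y t + theta α q γ s t • y' t)‖ ^ 2
    + ‖gradLy g K c p t (x t + theta α q γ s t • x' t) (y t)‖ ^ 2

/-- The energy function `Ê(t)` of Lemma 4.1, built from the saddle points `(x_t, y_t)` of the
augmented Lagrangians. -/
def Ehat {n m : ℕ} (f : Euc n → ℝ) (g : Euc m → ℝ) (K : Euc n →L[ℝ] Euc m)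
    (c p α q γ s : ℝ) (xt x x' : ℝ → Euc n) (yt y y' : ℝ → Euc m) (t : ℝ) : ℝ :=
  (t ^ (2*q+s) - 2*γ*q * t ^ (2*q-1) + γ * t ^ q) *
      (LagT f g K c p t (x t) (yt t) - LagT f g K c p t (xt t) (y t))
    + (1/2) * ‖(α-1) • (x t - xt t)
        + t ^ q • (x' t + γ • gradLx f K c p t (x t) (y t + theta α q γ s t • y' t))‖ ^ 2
    + (α-1)/2 * (1 - q * t ^ (q-1)) * ‖x t - xt t‖ ^ 2
    + (1/2) * ‖(α-1) • (y t - yt t)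
        + t ^ q • (y' t - γ • gradLy g K c p t (x t + theta α q γ s t • x' t) (y t))‖ ^ 2
    + (α-1)/2 * (1 - q * t ^ (q-1)) * ‖y t - yt t‖ ^ 2

/-- The energy function `E(t)` of Theorem 3.1, built from a fixed saddle point `(xs, ys)` of `L`. -/
def Efun {n m : ℕ} (f : Euc n → ℝ) (g : Euc m → ℝ) (K : Euc n →L[ℝ] Euc m)
    (c p α q γ s : ℝ) (xs : Euc n) (ys : Euc m)
    (x x' : ℝ → Euc n) (y y' : ℝ → Euc m) (t : ℝ) : ℝ :=
  (t ^ (2*q+s) - 2*γ*q * t ^ (2*q-1) + γ * t ^ q) *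
      (Lag f g K (x t) ys - Lag f g K xs (y t) + c / (2 * t ^ p) * (‖x t‖ ^ 2 + ‖y t‖ ^ 2))
    + (1/2) * ‖(α-1) • (x t - xs)
        + t ^ q • (x' t + γ • gradLx f K c p t (x t) (y t + theta α q γ s t • y' t))‖ ^ 2
    + (α-1)/2 * (1 - q * t ^ (q-1)) * ‖x t - xs‖ ^ 2
    + (1/2) * ‖(α-1) • (y t - ys)
        + t ^ q • (y' t - γ • gradLy g K c p t (x t + theta α q γ s t • x' t) (y t))‖ ^ 2
    + (α-1)/2 * (1 - q * t ^ (q-1)) * ‖y t - ys‖ ^ 2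

/-!
Comparing the saddle inequalities of `L_t` at `(x_t, y_t)` with those of `L` at any saddle point
`(x*, y*)` gives `‖(x_t, y_t)‖ ≤ ‖(x*, y*)‖`, since the regularising terms are all that is left.
So the curve is bounded, and as `c / t^p → 0` each of its cluster points at infinity is a saddle
point of `L` whose norm is at most the minimal one. The set of saddle points is convex, and by
the parallelogram law a minimal norm element of a convex set is unique, so the only cluster
point is `(x̄*, ȳ*)`.
-/

open Topology

lemma IsSaddle.of_tendsto {n m : ℕ} {ι : Type*} {l : Filter ι} [l.NeBot]
    {L : Euc n → Euc m → ℝ} {Lk : ι → Euc n → Euc m → ℝ} {xk : ι → Euc n} {yk : ι → Euc m}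
    {x : Euc n} {y : Euc m} (hsad : ∀ᶠ k in l, IsSaddle (Lk k) (xk k) (yk k))
    (hx : ∀ y', Tendsto (fun k => Lk k (xk k) y') l (𝓝 (L x y')))
    (hy : ∀ x', Tendsto (fun k => Lk k x' (yk k)) l (𝓝 (L x' y))) :
    IsSaddle L x y := by
  have key : ∀ x' y', L x y' ≤ L x' y := fun x' y' =>
    le_of_tendsto_of_tendsto (hx y') (hy x') <| hsad.mono fun k hk =>
      (hk x' y').1.trans (hk x' y').2
  exact fun x' y' => ⟨key x y', key x' y⟩

lemma IsSaddle.value_eq {n m : ℕ} {L : Euc n → Euc m → ℝ} {x₁ x₂ : Euc n} {y₁ y₂ : Euc m}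
    (h₁ : IsSaddle L x₁ y₁) (h₂ : IsSaddle L x₂ y₂) : L x₁ y₁ = L x₂ y₂ :=
  le_antisymm ((h₁ x₂ y₁).2.trans (h₂ x₂ y₁).1) ((h₂ x₁ y₂).2.trans (h₁ x₁ y₂).1)

lemma isSaddle_midpoint {n m : ℕ} {L : Euc n → Euc m → ℝ}
    (hconv : ∀ y, ConvexOn ℝ univ (L · y)) (hconc : ∀ x, ConcaveOn ℝ univ (L x))
    {x₁ x₂ : Euc n} {y₁ y₂ : Euc m} (h₁ : IsSaddle L x₁ y₁) (h₂ : IsSaddle L x₂ y₂) :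
    IsSaddle L (midpoint ℝ x₁ x₂) (midpoint ℝ y₁ y₂) := by
  have hv := h₁.value_eq h₂
  simp only [midpoint_eq_smul_add, invOf_eq_inv, smul_add]
  have upper : ∀ y, L ((2 : ℝ)⁻¹ • x₁ + (2 : ℝ)⁻¹ • x₂) y ≤ L x₁ y₁ := fun y => by
    have := (hconv y).2 (mem_univ x₁) (mem_univ x₂) (by norm_num : (0 : ℝ) ≤ 2⁻¹)
      (by norm_num : (0 : ℝ) ≤ 2⁻¹) (by norm_num)
    simp only [smul_eq_mul] at this
    linarith [(h₁ x₁ y).1, (h₂ x₂ y).1]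
  have lower : ∀ x, L x₁ y₁ ≤ L x ((2 : ℝ)⁻¹ • y₁ + (2 : ℝ)⁻¹ • y₂) := fun x => by
    have := (hconc x).2 (mem_univ y₁) (mem_univ y₂) (by norm_num : (0 : ℝ) ≤ 2⁻¹)
      (by norm_num : (0 : ℝ) ≤ 2⁻¹) (by norm_num)
    simp only [smul_eq_mul] at this
    linarith [(h₁ x y₁).2, (h₂ x y₂).2]
  have hmid := le_antisymm (upper _) (lower _)
  exact fun x y => ⟨hmid ▸ upper y, hmid ▸ lower x⟩

lemma sq_norm_midpoint {E : Type*} [NormedAddCommGroup E] [InnerProductSpace ℝ E] (a b : E) :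
    ‖midpoint ℝ a b‖ ^ 2 = (‖a‖ ^ 2 + ‖b‖ ^ 2) / 2 - ‖a - b‖ ^ 2 / 4 := by
  rw [midpoint_eq_smul_add, invOf_eq_inv, norm_smul, mul_pow, norm_inv, Real.norm_two]
  linarith [parallelogram_law_with_norm ℝ a b]

lemma isCompact_setOf_sq_norm_add_sq_norm_le {E F : Type*} [NormedAddCommGroup E]
    [NormedAddCommGroup F] [ProperSpace E] [ProperSpace F] (r : ℝ) :
    IsCompact {z : E × F | ‖z.1‖ ^ 2 + ‖z.2‖ ^ 2 ≤ r} := by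
  refine (isCompact_closedBall (0 : E × F) √r).of_isClosed_subset
    (isClosed_le (by fun_prop) continuous_const) fun z (hz : ‖z.1‖ ^ 2 + ‖z.2‖ ^ 2 ≤ r) => ?_
  have hr : 0 ≤ r := le_trans (by positivity) hz
  rw [mem_closedBall_zero_iff, Prod.norm_def, max_le_iff, Real.le_sqrt (norm_nonneg _) hr,
    Real.le_sqrt (norm_nonneg _) hr]
  exact ⟨by linarith [sq_nonneg ‖z.2‖], by linarith [sq_nonneg ‖z.1‖]⟩

section Lagrangian

variable {n m : ℕ} {f : Euc n → ℝ} {g : Euc m → ℝ} (K : Euc n →L[ℝ] Euc m)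

lemma convexOn_lag (hfc : ConvexOn ℝ univ f) (y : Euc m) :
    ConvexOn ℝ univ (Lag f g K · y) :=
  (hfc.add (((innerSLFlip ℝ y).comp K).toLinearMap.convexOn convex_univ)).sub
    (concaveOn_const (g y) convex_univ)

lemma concaveOn_lag (hgc : ConvexOn ℝ univ g) (x : Euc n) :
    ConcaveOn ℝ univ (Lag f g K x) :=
  ((concaveOn_const (f x) convex_univ).add
    ((innerSL ℝ (K x)).toLinearMap.concaveOn convex_univ)).sub hgc

lemma continuous_lag (hf : Continuous f) (hg : Continuous g) :
    Continuous fun z : Euc n × Euc m => Lag f g K z.1 z.2 := by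
  unfold Lag
  fun_prop

lemma sq_norm_add_sq_norm_le_of_isSaddle_lagT {c p t : ℝ} (hc : 0 < c) (ht : 0 < t)
    {xt xs : Euc n} {yt ys : Euc m} (hsadT : IsSaddle (LagT f g K c p t) xt yt)
    (hsad : IsSaddle (Lag f g K) xs ys) : ‖xt‖ ^ 2 + ‖yt‖ ^ 2 ≤ ‖xs‖ ^ 2 + ‖ys‖ ^ 2 := by
  have hε : 0 < c / (2 * t ^ p) := by positivity
  have hT := (hsadT xs ys).1.trans (hsadT xs ys).2
  have h := (hsad xt yt).1.trans (hsad xt yt).2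
  simp only [LagT] at hT
  exact le_of_mul_le_mul_left (by linarith) hε

lemma tendsto_lagT (hf : Continuous f) (hg : Continuous g) (c : ℝ) {p : ℝ} (hp : 0 < p)
    {l : Filter ℝ} (hl : l ≤ atTop) {u : ℝ → Euc n} {v : ℝ → Euc m} {x : Euc n} {y : Euc m}
    (hu : Tendsto u l (𝓝 x)) (hv : Tendsto v l (𝓝 y)) :
    Tendsto (fun t => LagT f g K c p t (u t) (v t)) l (𝓝 (Lag f g K x y)) := by
  have hε : Tendsto (fun t => c / (2 * t ^ p)) l (𝓝 0) :=
    (tendsto_const_nhds.div_atTop ((tendsto_rpow_atTop hp).const_mul_atTop two_pos)).mono_left hl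
  have hL := ((continuous_lag K hf hg).tendsto (x, y)).comp (hu.prodMk_nhds hv)
  have hreg := hε.mul ((hu.norm.pow 2).sub (hv.norm.pow 2))
  simpa [LagT] using hL.add hreg

lemma isSaddle_of_mapClusterPt (hf : Continuous f) (hg : Continuous g) {c p : ℝ} (hp : 0 < p)
    {xt : ℝ → Euc n} {yt : ℝ → Euc m}
    (hsad : ∀ᶠ t in atTop, IsSaddle (LagT f g K c p t) (xt t) (yt t)) {z : Euc n × Euc m}
    (hz : MapClusterPt z atTop fun t => (xt t, yt t)) : IsSaddle (Lag f g K) z.1 z.2 := by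
  obtain ⟨U, hU, hzU⟩ := mapClusterPt_iff_ultrafilter.1 hz
  have hx : Tendsto xt U (𝓝 z.1) := (continuous_fst.tendsto z).comp hzU
  have hy : Tendsto yt U (𝓝 z.2) := (continuous_snd.tendsto z).comp hzU
  exact IsSaddle.of_tendsto (hU hsad)
    (fun _ => tendsto_lagT K hf hg c hp hU hx tendsto_const_nhds)
    (fun _ => tendsto_lagT K hf hg c hp hU tendsto_const_nhds hy)

lemma eq_of_isSaddle_of_sq_norm_le (hfc : ConvexOn ℝ univ f) (hgc : ConvexOn ℝ univ g)
    {xb x : Euc n} {yb y : Euc m} (hb : IsSaddle (Lag f g K) xb yb)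
    (hmin : ∀ xs ys, IsSaddle (Lag f g K) xs ys → ‖xb‖ ^ 2 + ‖yb‖ ^ 2 ≤ ‖xs‖ ^ 2 + ‖ys‖ ^ 2)
    (hsad : IsSaddle (Lag f g K) x y) (hle : ‖x‖ ^ 2 + ‖y‖ ^ 2 ≤ ‖xb‖ ^ 2 + ‖yb‖ ^ 2) :
    x = xb ∧ y = yb := by
  have hmid := hmin _ _ (isSaddle_midpoint (convexOn_lag K hfc) (concaveOn_lag K hgc) hsad hb)
  rw [sq_norm_midpoint, sq_norm_midpoint] at hmid
  have hx := sq_nonneg ‖x - xb‖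
  have hy := sq_nonneg ‖y - yb‖
  constructor
  · rw [← sub_eq_zero, ← norm_eq_zero, ← sq_eq_zero_iff]; linarith
  · rw [← sub_eq_zero, ← norm_eq_zero, ← sq_eq_zero_iff]; linarith

end Lagrangian

theorem stmt6_general
    {n m : ℕ}
    (f : Euc n → ℝ) (g : Euc m → ℝ) (K : Euc n →L[ℝ] Euc m)
    (hfc : ConvexOn ℝ Set.univ f) (hgc : ConvexOn ℝ Set.univ g)
    (c p t₀ : ℝ) (hc : 0 < c) (hp0 : 0 < p) (ht₀ : 0 < t₀)
    (xt : ℝ → Euc n) (yt : ℝ → Euc m)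
    (hsad : ∀ t ≥ t₀, IsSaddle (LagT f g K c p t) (xt t) (yt t))
    (xb : Euc n) (yb : Euc m)
    (hb : IsSaddle (Lag f g K) xb yb)
    (hmin : ∀ xs : Euc n, ∀ ys : Euc m, IsSaddle (Lag f g K) xs ys →
      Real.sqrt (‖xb‖ ^ 2 + ‖yb‖ ^ 2) ≤ Real.sqrt (‖xs‖ ^ 2 + ‖ys‖ ^ 2)) :
    Tendsto (fun t => Real.sqrt (‖xt t - xb‖ ^ 2 + ‖yt t - yb‖ ^ 2)) atTop (nhds 0) ∧
      ∀ t ≥ t₀, Real.sqrt (‖xt t‖ ^ 2 + ‖yt t‖ ^ 2) ≤ Real.sqrt (‖xb‖ ^ 2 + ‖yb‖ ^ 2) := by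
  have hbound : ∀ t ≥ t₀, ‖xt t‖ ^ 2 + ‖yt t‖ ^ 2 ≤ ‖xb‖ ^ 2 + ‖yb‖ ^ 2 := fun t ht =>
    sq_norm_add_sq_norm_le_of_isSaddle_lagT K hc (ht₀.trans_le ht) (hsad t ht) hb
  refine ⟨?_, fun t ht => Real.sqrt_le_sqrt (hbound t ht)⟩
  have hmin_sq : ∀ xs ys, IsSaddle (Lag f g K) xs ys →
      ‖xb‖ ^ 2 + ‖yb‖ ^ 2 ≤ ‖xs‖ ^ 2 + ‖ys‖ ^ 2 := fun xs ys h =>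
    (Real.sqrt_le_sqrt_iff (by positivity)).1 (hmin xs ys h)
  have hlim : Tendsto (fun t => (xt t, yt t)) atTop (𝓝 (xb, yb)) := by
    refine (isCompact_setOf_sq_norm_add_sq_norm_le _).tendsto_nhds_of_unique_mapClusterPt
      ((eventually_ge_atTop t₀).mono hbound) fun z hz hcl => ?_
    have hzsad := isSaddle_of_mapClusterPt K hfc.locallyLipschitz.continuous
      hgc.locallyLipschitz.continuous hp0 ((eventually_ge_atTop t₀).mono hsad) hcl
    obtain ⟨hx, hy⟩ := eq_of_isSaddle_of_sq_norm_le K hfc hgc hb hmin_sq hzsad hz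
    exact Prod.ext hx hy
  have hdist : Continuous fun z : Euc n × Euc m => √(‖z.1 - xb‖ ^ 2 + ‖z.2 - yb‖ ^ 2) := by
    fun_prop
  simpa [Function.comp_def] using (hdist.tendsto (xb, yb)).comp hlim

/-- convergence of the Tikhonov curve `(x_t, y_t)` to the minimal norm saddle
point and the norm bound `‖(x_t,y_t)‖ ≤ ‖(x̄*,ȳ*)‖`. -/
theorem stmt6
    {n m : ℕ}
    (f : Euc n → ℝ) (g : Euc m → ℝ) (K : Euc n →L[ℝ] Euc m)
    (hf : ContDiff ℝ 2 f) (hg : ContDiff ℝ 2 g)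
    (hfc : ConvexOn ℝ Set.univ f) (hgc : ConvexOn ℝ Set.univ g)
    (c p t₀ : ℝ) (hc : 0 < c) (hp0 : 0 < p) (hp1 : p < 1) (ht₀ : 0 < t₀)
    (xt : ℝ → Euc n) (yt : ℝ → Euc m)
    (hsad : ∀ t ≥ t₀, IsSaddle (LagT f g K c p t) (xt t) (yt t))
    (xb : Euc n) (yb : Euc m)
    (hb : IsSaddle (Lag f g K) xb yb)
    (hmin : ∀ xs : Euc n, ∀ ys : Euc m, IsSaddle (Lag f g K) xs ys →
      Real.sqrt (‖xb‖ ^ 2 + ‖yb‖ ^ 2) ≤ Real.sqrt (‖xs‖ ^ 2 + ‖ys‖ ^ 2)) :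
    Tendsto (fun t => Real.sqrt (‖xt t - xb‖ ^ 2 + ‖yt t - yb‖ ^ 2)) atTop (nhds 0) ∧
      ∀ t ≥ t₀, Real.sqrt (‖xt t‖ ^ 2 + ‖yt t‖ ^ 2) ≤ Real.sqrt (‖xb‖ ^ 2 + ‖yb‖ ^ 2) :=
  stmt6_general f g K hfc hgc c p t₀ hc hp0 ht₀ xt yt hsad xb yb hb hmin
end
end

section
/- Assume 0 < p < 1. Let (x̄*, ȳ*) be the element of minimal norm of Ω and, for each t ≥ t₀ > 0, let (x_t, y_t) be the unique saddle point of L_t, and assume the curve t ↦ (x_t, y_t) is differentiable. Then ‖(ẋ_t, ẏ_t)‖ ≤ (p/t)‖(x_t, y_t)‖ ≤ (p/t)‖(x̄*, ȳ*)‖ for all t ≥ t₀. -/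
/-
With `μ(t) = c / t ^ p`, the saddle points of `L_t` are the zeros of `A + μ(t) I` and those of
`L` are the zeros of `A`, where `A(x, y) = (∇f x + K* y, ∇g y - K x)` is the saddle operator of
`L`; the convexity of `f` and `g` makes `A` monotone on `ℝⁿ × ℝᵐ` with the `L²` product norm.
Testing monotonicity of `A` between `z_t = (x_t, y_t)` and a zero `z̄` of `A` gives
`μ ⟪z_t, z_t - z̄⟫ ≤ 0`, hence `‖z_t‖ ≤ ‖z̄‖`. Testing it between `z_s` and `z_t` and letting
`s ↓ t` gives `⟪(μ z)˙, ż⟫ ≤ 0`, that is `μ ‖ż‖² ≤ -μ̇ ⟪z, ż⟫ = (p / t) μ ⟪z, ż⟫`, hence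
`‖ż‖ ≤ (p / t) ‖z‖`.
-/

open Real Set Filter MeasureTheory
open scoped RealInnerProductSpace

noncomputable section

open Topology WithLp

section MonotoneOperator

variable {H : Type*} [NormedAddCommGroup H] [InnerProductSpace ℝ H]

def IsMonotoneOperator (A : H → H) : Prop :=
  ∀ u v, 0 ≤ ⟪A u - A v, u - v⟫

theorem inner_nonneg_of_eventually_inner_sub_nonneg {u z : ℝ → H} {u' z' : H} {t : ℝ}
    (hu : HasDerivAt u u' t) (hz : HasDerivAt z z' t)
    (h : ∀ᶠ s in 𝓝[>] t, 0 ≤ ⟪u s - u t, z s - z t⟫) : 0 ≤ ⟪u', z'⟫ := by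
  have hslope : Tendsto (fun s => ⟪slope u t s, slope z t s⟫) (𝓝[>] t) (𝓝 ⟪u', z'⟫) :=
    ((hasDerivAt_iff_tendsto_slope.mp hu).inner (hasDerivAt_iff_tendsto_slope.mp hz)).mono_left
      (nhdsGT_le_nhdsNE t)
  refine ge_of_tendsto hslope (h.mono fun s hs => ?_)
  simp only [slope_def_module, real_inner_smul_left, real_inner_smul_right, ← mul_assoc]
  exact mul_nonneg (mul_self_nonneg _) hs

theorem IsMonotoneOperator.norm_le_of_add_smul_eq_zero {A : H → H} (hA : IsMonotoneOperator A)
    {z z₀ : H} {μ : ℝ} (hμ : 0 < μ) (hz : A z + μ • z = 0) (hz₀ : A z₀ = 0) :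
    ‖z‖ ≤ ‖z₀‖ := by
  have hmono := hA z z₀
  rw [hz₀, sub_zero, eq_neg_of_add_eq_zero_left hz, inner_neg_left, real_inner_smul_left,
    inner_sub_right, real_inner_self_eq_norm_sq] at hmono
  have hsq : ‖z‖ ^ 2 ≤ ‖z‖ * ‖z₀‖ :=
    (le_of_sub_nonneg (by nlinarith)).trans (real_inner_le_norm z z₀)
  rcases (norm_nonneg z).eq_or_lt with h | h
  · rw [← h]; exact norm_nonneg _
  · nlinarith

theorem IsMonotoneOperator.mul_norm_deriv_le_of_add_smul_eq_zero {A : H → H}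
    (hA : IsMonotoneOperator A) {z : ℝ → H} {μ : ℝ → ℝ} {z' : H} {μ' t : ℝ}
    (hz : HasDerivAt z z' t) (hμ : HasDerivAt μ μ' t) (hμ' : μ' ≤ 0)
    (heq : ∀ s ≥ t, A (z s) + μ s • z s = 0) :
    μ t * ‖z'‖ ≤ -μ' * ‖z t‖ := by
  have hA_eq : ∀ s ≥ t, A (z s) = -(μ s • z s) := fun s hs =>
    eq_neg_of_add_eq_zero_left (heq s hs)
  have key : 0 ≤ ⟪-(μ t • z' + μ' • z t), z'⟫ := by
    refine inner_nonneg_of_eventually_inner_sub_nonneg (hμ.smul hz).neg hz ?_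
    filter_upwards [self_mem_nhdsWithin] with s hs
    have := hA (z s) (z t)
    rwa [hA_eq s (le_of_lt hs), hA_eq t le_rfl] at this
  rw [inner_neg_left, inner_add_left, real_inner_smul_left, real_inner_smul_left,
    real_inner_self_eq_norm_sq] at key
  have hsq : μ t * ‖z'‖ ^ 2 ≤ -μ' * ‖z t‖ * ‖z'‖ := by
    nlinarith [real_inner_le_norm (z t) z']
  rcases (norm_nonneg z').eq_or_lt with h | h
  · rw [← h]; nlinarith [norm_nonneg (z t)]
  · nlinarith

end MonotoneOperator

theorem HasDerivAt.toLp_prodMk {E F : Type*} [NormedAddCommGroup E] [NormedSpace ℝ E]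
    [NormedAddCommGroup F] [NormedSpace ℝ F] {u : ℝ → E} {v : ℝ → F} {u' : E} {v' : F} {t : ℝ}
    (hu : HasDerivAt u u' t) (hv : HasDerivAt v v' t) :
    HasDerivAt (fun s => toLp 2 (u s, v s)) (toLp 2 (u', v')) t :=
  (prodContinuousLinearEquiv 2 ℝ E F).symm.hasFDerivAt.comp_hasDerivAt t (hu.prodMk hv)

section Gradient

variable {E : Type*} [NormedAddCommGroup E] [InnerProductSpace ℝ E] [CompleteSpace E]

theorem IsLocalMin.hasGradientAt_eq_zero {h : E → ℝ} {a d : E} (hmin : IsLocalMin h a)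
    (hd : HasGradientAt h d a) : d = 0 :=
  (InnerProductSpace.toDual ℝ E).map_eq_zero_iff.mp
    (hmin.hasFDerivAt_eq_zero (hasGradientAt_iff_hasFDerivAt.mp hd))

theorem IsLocalMax.hasGradientAt_eq_zero {h : E → ℝ} {a d : E} (hmax : IsLocalMax h a)
    (hd : HasGradientAt h d a) : d = 0 :=
  (InnerProductSpace.toDual ℝ E).map_eq_zero_iff.mp
    (hmax.hasFDerivAt_eq_zero (hasGradientAt_iff_hasFDerivAt.mp hd))

theorem ConvexOn.inner_gradient_sub_nonneg {h : E → ℝ} (hc : ConvexOn ℝ univ h)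
    (hd : Differentiable ℝ h) (a b : E) :
    0 ≤ ⟪gradient h b - gradient h a, b - a⟫ := by
  let ℓ : ℝ →ᵃ[ℝ] E := AffineMap.lineMap a b
  have hφ : ∀ σ : ℝ, HasDerivAt (h ∘ ℓ) ⟪gradient h (ℓ σ), b - a⟫ σ := by
    intro σ
    have hgrad := (hd (ℓ σ)).hasGradientAt
    rw [hasGradientAt_iff_hasFDerivAt] at hgrad
    exact (hgrad.comp_hasDerivAt σ AffineMap.hasDerivAt_lineMap).congr_deriv
      InnerProductSpace.toDual_apply_apply
  have hφc : ConvexOn ℝ univ (h ∘ ℓ) := by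
    simpa only [preimage_univ] using hc.comp_affineMap ℓ
  have hmono := hφc.monotoneOn_deriv (fun σ _ => (hφ σ).differentiableAt)
    (mem_univ 0) (mem_univ 1) zero_le_one
  rw [(hφ 0).deriv, (hφ 1).deriv] at hmono
  simp only [ℓ, AffineMap.lineMap_apply_zero, AffineMap.lineMap_apply_one] at hmono
  rw [inner_sub_left]
  linarith

end Gradient

section SaddleOperator

variable {E F : Type*} [NormedAddCommGroup E] [InnerProductSpace ℝ E] [CompleteSpace E]
  [NormedAddCommGroup F] [InnerProductSpace ℝ F] [CompleteSpace F]

def saddleOp (f : E → ℝ) (g : F → ℝ) (K : E →L[ℝ] F) (z : WithLp 2 (E × F)) :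
    WithLp 2 (E × F) :=
  toLp 2 (gradient f z.fst + ContinuousLinearMap.adjoint K z.snd, gradient g z.snd - K z.fst)

theorem isMonotoneOperator_saddleOp {f : E → ℝ} {g : F → ℝ} (hfc : ConvexOn ℝ univ f)
    (hgc : ConvexOn ℝ univ g) (hfd : Differentiable ℝ f) (hgd : Differentiable ℝ g)
    (K : E →L[ℝ] F) : IsMonotoneOperator (saddleOp f g K) := by
  intro u v
  have hcross : ⟪ContinuousLinearMap.adjoint K (u.snd - v.snd), u.fst - v.fst⟫
      = ⟪K (u.fst - v.fst), u.snd - v.snd⟫ := by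
    rw [ContinuousLinearMap.adjoint_inner_left, real_inner_comm]
  have hsplit : ⟪saddleOp f g K u - saddleOp f g K v, u - v⟫
      = ⟪gradient f u.fst - gradient f v.fst, u.fst - v.fst⟫
        + ⟪gradient g u.snd - gradient g v.snd, u.snd - v.snd⟫
        + (⟪ContinuousLinearMap.adjoint K (u.snd - v.snd), u.fst - v.fst⟫
          - ⟪K (u.fst - v.fst), u.snd - v.snd⟫) := by
    simp only [saddleOp, prod_inner_apply, ofLp_fst, ofLp_snd, sub_fst, sub_snd,
      map_sub, inner_add_left, inner_sub_left]
    ring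
  rw [hsplit, hcross, sub_self, add_zero]
  exact add_nonneg (hfc.inner_gradient_sub_nonneg hfd _ _) (hgc.inner_gradient_sub_nonneg hgd _ _)

end SaddleOperator

section AugmentedLagrangian

variable {n m : ℕ} {f : Euc n → ℝ} {g : Euc m → ℝ} {K : Euc n →L[ℝ] Euc m} {c p t : ℝ}

theorem hasGradientAt_lagT_left {x : Euc n} (y : Euc m) (hf : DifferentiableAt ℝ f x) :
    HasGradientAt (fun x => LagT f g K c p t x y) (gradLx f K c p t x y) x := by
  have hlin : HasFDerivAt (fun x => ⟪K x, y⟫) ((innerSL ℝ y).comp K) x :=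
    ((innerSL ℝ y).comp K).hasFDerivAt.congr_of_eventuallyEq
      (.of_forall fun x => real_inner_comm _ _)
  have hsum := ((hf.hasFDerivAt.add hlin).sub_const (g y)).add
    (((hasStrictFDerivAt_norm_sq x).hasFDerivAt.sub_const (‖y‖ ^ 2)).const_mul (c / (2 * t ^ p)))
  refine hasGradientAt_iff_hasFDerivAt.mpr (hsum.congr_fderiv (ContinuousLinearMap.ext fun v => ?_))
  simp only [gradLx, add_apply, ContinuousLinearMap.comp_apply,
    coe_innerSL_apply, smul_apply, nsmul_eq_mul, Nat.cast_ofNat, smul_eq_mul,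
    map_add, toDual_gradient, map_smul, InnerProductSpace.toDual_apply_apply,
    ContinuousLinearMap.adjoint_inner_left, add_right_inj]
  ring

theorem hasGradientAt_lagT_right (x : Euc n) {y : Euc m} (hg : DifferentiableAt ℝ g y) :
    HasGradientAt (fun y => LagT f g K c p t x y) (gradLy g K c p t x y) y := by
  have hsum := ((((innerSL ℝ (K x)).hasFDerivAt).const_add (f x)).sub hg.hasFDerivAt).add
    (((hasStrictFDerivAt_norm_sq y).hasFDerivAt.const_sub (‖x‖ ^ 2)).const_mul (c / (2 * t ^ p)))
  refine hasGradientAt_iff_hasFDerivAt.mpr (hsum.congr_fderiv (ContinuousLinearMap.ext fun v => ?_))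
  simp only [gradLy, smul_neg, add_apply, sub_apply,
    coe_innerSL_apply, neg_apply, smul_apply,
    nsmul_eq_mul, Nat.cast_ofNat, smul_eq_mul, map_sub, map_add, map_neg, toDual_gradient,
    map_smul, InnerProductSpace.toDual_apply_apply]
  ring

theorem lagT_zero : LagT f g K 0 p t = Lag f g K := by
  funext x y
  simp [LagT]

theorem IsSaddle.saddleOp_add_smul_eq_zero {x : Euc n} {y : Euc m}
    (h : IsSaddle (LagT f g K c p t) x y) (hf : DifferentiableAt ℝ f x)
    (hg : DifferentiableAt ℝ g y) :
    saddleOp f g K (toLp 2 (x, y)) + (c / t ^ p) • toLp 2 (x, y) = 0 := by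
  have hx : gradLx f K c p t x y = 0 :=
    IsLocalMin.hasGradientAt_eq_zero (.of_forall fun x' => (h x' y).2)
      (hasGradientAt_lagT_left y hf)
  have hy : gradLy g K c p t x y = 0 :=
    IsLocalMax.hasGradientAt_eq_zero (.of_forall fun y' => (h x y').1)
      (hasGradientAt_lagT_right x hg)
  have hy' : gradient g y - K x + (c / t ^ p) • y = 0 := by
    rw [← neg_eq_zero, ← hy, gradLy]
    abel
  refine WithLp.ofLp_injective 2 (Prod.ext ?_ ?_)
  · simpa [saddleOp, gradLx] using hx
  · simpa [saddleOp] using hy'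

end AugmentedLagrangian

theorem hasDerivAt_const_div_rpow (c p : ℝ) {t : ℝ} (ht : 0 < t) :
    HasDerivAt (fun s : ℝ => c / s ^ p) (-(p / t) * (c / t ^ p)) t := by
  have htp : t ^ p ≠ 0 := (rpow_pos_of_pos ht p).ne'
  refine ((hasDerivAt_const t c).div (hasDerivAt_rpow_const (Or.inl ht.ne')) htp).congr_deriv ?_
  rw [rpow_sub ht, rpow_one]
  field_simp
  ring

theorem stmt7_general
    {n m : ℕ}
    (f : Euc n → ℝ) (g : Euc m → ℝ) (K : Euc n →L[ℝ] Euc m)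
    (hf : ContDiff ℝ 2 f) (hg : ContDiff ℝ 2 g)
    (hfc : ConvexOn ℝ Set.univ f) (hgc : ConvexOn ℝ Set.univ g)
    (c p t₀ : ℝ) (hc : 0 < c) (hp0 : 0 < p) (ht₀ : 0 < t₀)
    (xt : ℝ → Euc n) (yt : ℝ → Euc m)
    (hsad : ∀ t ≥ t₀, IsSaddle (LagT f g K c p t) (xt t) (yt t))
    (xt' : ℝ → Euc n) (yt' : ℝ → Euc m)
    (hxt' : ∀ t ≥ t₀, HasDerivAt xt (xt' t) t)
    (hyt' : ∀ t ≥ t₀, HasDerivAt yt (yt' t) t)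
    (xb : Euc n) (yb : Euc m)
    (hb : IsSaddle (Lag f g K) xb yb) :
    ∀ t ≥ t₀,
      Real.sqrt (‖xt' t‖ ^ 2 + ‖yt' t‖ ^ 2) ≤ p / t * Real.sqrt (‖xt t‖ ^ 2 + ‖yt t‖ ^ 2) ∧
      p / t * Real.sqrt (‖xt t‖ ^ 2 + ‖yt t‖ ^ 2) ≤ p / t * Real.sqrt (‖xb‖ ^ 2 + ‖yb‖ ^ 2) := by
  intro t ht
  have ht0 : 0 < t := ht₀.trans_le ht
  have hfd : Differentiable ℝ f := hf.differentiable two_ne_zero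
  have hgd : Differentiable ℝ g := hg.differentiable two_ne_zero
  have hmono := isMonotoneOperator_saddleOp hfc hgc hfd hgd K
  have hμ : 0 < c / t ^ p := div_pos hc (rpow_pos_of_pos ht0 p)
  have hcurve : ∀ s ≥ t,
      saddleOp f g K (toLp 2 (xt s, yt s)) + (c / s ^ p) • toLp 2 (xt s, yt s) = 0 :=
    fun s hs => (hsad s (ht.trans hs)).saddleOp_add_smul_eq_zero (hfd _) (hgd _)
  have hlimit : saddleOp f g K (toLp 2 (xb, yb)) = 0 := by
    rw [← lagT_zero (p := p) (t := t)] at hb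
    simpa using hb.saddleOp_add_smul_eq_zero (hfd xb) (hgd yb)
  have hz := (hxt' t ht).toLp_prodMk (hyt' t ht)
  have hbound := hmono.norm_le_of_add_smul_eq_zero hμ (hcurve t le_rfl) hlimit
  have hvelocity := hmono.mul_norm_deriv_le_of_add_smul_eq_zero hz
    (hasDerivAt_const_div_rpow c p ht0) (by nlinarith [div_pos hp0 ht0]) hcurve
  simp only [prod_norm_eq_of_L2, toLp_fst, toLp_snd] at hbound hvelocity
  refine ⟨le_of_mul_le_mul_left ?_ hμ, by gcongr⟩
  linarith

/-- velocity bound `‖(ẋ_t, ẏ_t)‖ ≤ (p/t)‖(x_t,y_t)‖ ≤ (p/t)‖(x̄*,ȳ*)‖` for the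
Tikhonov curve. -/
theorem stmt7
    {n m : ℕ}
    (f : Euc n → ℝ) (g : Euc m → ℝ) (K : Euc n →L[ℝ] Euc m)
    (hf : ContDiff ℝ 2 f) (hg : ContDiff ℝ 2 g)
    (hfc : ConvexOn ℝ Set.univ f) (hgc : ConvexOn ℝ Set.univ g)
    (c p t₀ : ℝ) (hc : 0 < c) (hp0 : 0 < p) (hp1 : p < 1) (ht₀ : 0 < t₀)
    (xt : ℝ → Euc n) (yt : ℝ → Euc m)
    (hsad : ∀ t ≥ t₀, IsSaddle (LagT f g K c p t) (xt t) (yt t))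
    (xt' : ℝ → Euc n) (yt' : ℝ → Euc m)
    (hxt' : ∀ t ≥ t₀, HasDerivAt xt (xt' t) t)
    (hyt' : ∀ t ≥ t₀, HasDerivAt yt (yt' t) t)
    (xb : Euc n) (yb : Euc m)
    (hb : IsSaddle (Lag f g K) xb yb)
    (hmin : ∀ xs : Euc n, ∀ ys : Euc m, IsSaddle (Lag f g K) xs ys →
      Real.sqrt (‖xb‖ ^ 2 + ‖yb‖ ^ 2) ≤ Real.sqrt (‖xs‖ ^ 2 + ‖ys‖ ^ 2)) :
    ∀ t ≥ t₀,
      Real.sqrt (‖xt' t‖ ^ 2 + ‖yt' t‖ ^ 2) ≤ p / t * Real.sqrt (‖xt t‖ ^ 2 + ‖yt t‖ ^ 2) ∧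
      p / t * Real.sqrt (‖xt t‖ ^ 2 + ‖yt t‖ ^ 2) ≤ p / t * Real.sqrt (‖xb‖ ^ 2 + ‖yb‖ ^ 2) :=
  stmt7_general f g K hf hg hfc hgc c p t₀ hc hp0 ht₀ xt yt hsad xt' yt' hxt' hyt' xb yb hb
end
end

section
/- Let (x,y) be a global solution of the dynamical system (dyn), fix (x*, y*) ∈ Ω, and assume s > max{0, p−2}. Then there exists t₄ ≥ t₀ such that the energy function E satisfies E'(t) ≤ ((α−1)c/2)·t^{q+s−p}·(‖x*‖² + ‖y*‖²) for all t ≥ t₄. -/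
open Real Set Filter MeasureTheory
open scoped RealInnerProductSpace

noncomputable section

/-!
Differentiate `E` along the trajectory. In each component the ODE turns the derivative of the
momentum `(α-1)(x - x*) + t^q (ẋ + γ ∇ₓL_t)` into `(q t^(q-1) - 1) ẋ - D(t) ∇ₓL_t`, where
`D(t) = t^(q+s) - γ q t^(q-1)`. Since `(α-1) D(t) θ(t)` is exactly the weight `A(t)` of the
Lagrangian gap in `E`, the bilinear terms in `K` cancel, and `⟪x - x*, (c/t^p) x⟫` splits as
`(c/(2t^p)) (‖x‖² + ‖x - x*‖² - ‖x*‖²)`. What remains is `a(t)` times the regularized gap,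
Bregman divergences, squared velocities and squared gradients, all with eventually nonpositive
coefficients (for the `‖x - x*‖²` term this is where `s > p - 2` enters), plus
`(α-1) D(t) (c/(2t^p)) (‖x*‖² + ‖y*‖²) ≤ ((α-1)c/2) t^(q+s-p) (‖x*‖² + ‖y*‖²)`.
-/

lemma eventually_mul_rpow_le_mul_rpow (a : ℝ) {e₁ e₂ ε : ℝ} (he : e₁ < e₂) (hε : 0 < ε) :
    ∀ᶠ t : ℝ in atTop, a * t ^ e₁ ≤ ε * t ^ e₂ := by
  have hlim : Tendsto (fun t : ℝ => a * t ^ (e₁ - e₂)) atTop (nhds 0) := by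
    simpa [neg_sub] using (tendsto_rpow_neg_atTop (sub_pos.2 he)).const_mul a
  filter_upwards [hlim.eventually_lt_const hε, eventually_gt_atTop 0] with t hlt ht
  calc a * t ^ e₁ = a * t ^ (e₁ - e₂) * t ^ e₂ := by
        rw [mul_assoc, ← rpow_add ht, sub_add_cancel]
    _ ≤ ε * t ^ e₂ := by gcongr

section Bregman

variable {E : Type*} [NormedAddCommGroup E] [InnerProductSpace ℝ E] [CompleteSpace E]

def bregmanDiv (f : E → ℝ) (x z : E) : ℝ :=
  f z - f x - ⟪gradient f x, z - x⟫

lemma ConvexOn.bregmanDiv_nonneg {f : E → ℝ} (hfc : ConvexOn ℝ univ f) {x : E}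
    (hf : DifferentiableAt ℝ f x) (z : E) : 0 ≤ bregmanDiv f x z := by
  have hconv : ConvexOn ℝ univ (f ∘ AffineMap.lineMap (k := ℝ) x z) := by
    simpa using hfc.comp_affineMap (AffineMap.lineMap x z : ℝ →ᵃ[ℝ] E)
  have hderiv : HasDerivAt (f ∘ AffineMap.lineMap (k := ℝ) x z) ⟪gradient f x, z - x⟫ 0 := by
    simpa using hf.hasGradientAt.hasFDerivAt.comp_hasDerivAt_of_eq 0
      AffineMap.hasDerivAt_lineMap (AffineMap.lineMap_apply_zero x z).symm
  have hslope := hconv.le_slope_of_hasDerivAt (mem_univ 0) (mem_univ 1) one_pos hderiv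
  simp only [slope_def_field, Function.comp_apply, AffineMap.lineMap_apply_one,
    AffineMap.lineMap_apply_zero, sub_zero, div_one] at hslope
  rw [bregmanDiv]
  linarith

end Bregman

lemma IsSaddle.lag_sub_lag_nonneg {n m : ℕ} {f : Euc n → ℝ} {g : Euc m → ℝ}
    {K : Euc n →L[ℝ] Euc m} {xs : Euc n} {ys : Euc m} (h : IsSaddle (Lag f g K) xs ys)
    (x : Euc n) (y : Euc m) : 0 ≤ Lag f g K x ys - Lag f g K xs y := by
  linarith [(h x y).1, (h x y).2]

section Coefficients

variable {α q γ s c p t : ℝ}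

/- `gapCoeff` is the weight `A(t)` of the Lagrangian gap in `Efun`, and
`theta = gapCoeff / ((α - 1) * dampCoeff)`. -/
def gapCoeff (γ q s t : ℝ) : ℝ := t ^ (2*q+s) - 2*γ*q * t ^ (2*q-1) + γ * t ^ q

def dampCoeff (γ q s t : ℝ) : ℝ := t ^ (q+s) - γ*q * t ^ (q-1)

lemma gapCoeff_eq (ht : 0 < t) :
    gapCoeff γ q s t = t ^ q * dampCoeff γ q s t + γ * t ^ q * (1 - q * t ^ (q-1)) := by
  have h1 : t ^ q * t ^ (q+s) = t ^ (2*q+s) := by rw [← rpow_add ht]; ring_nf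
  have h2 : t ^ q * t ^ (q-1) = t ^ (2*q-1) := by rw [← rpow_add ht]; ring_nf
  rw [gapCoeff, dampCoeff]
  linear_combination -h1 + 2 * γ * q * h2

lemma mul_dampCoeff_mul_theta (hα : 1 < α) (hD : dampCoeff γ q s t ≠ 0) :
    (α - 1) * dampCoeff γ q s t * theta α q γ s t = gapCoeff γ q s t := by
  have h : (α - 1) * dampCoeff γ q s t ≠ 0 := mul_ne_zero (sub_ne_zero.2 hα.ne') hD
  exact mul_div_cancel₀ (gapCoeff γ q s t) h

lemma hasDerivAt_gapCoeff (ht : 0 < t) :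
    HasDerivAt (gapCoeff γ q s) (aFun α q γ s t + (α - 1) * dampCoeff γ q s t) t := by
  have hpow (e : ℝ) : HasDerivAt (fun τ : ℝ => τ ^ e) (e * t ^ (e - 1)) t :=
    hasDerivAt_rpow_const (Or.inl ht.ne')
  refine (((hpow (2*q+s)).sub ((hpow (2*q-1)).const_mul (2*γ*q))).add
    ((hpow q).const_mul γ)).congr_deriv ?_
  rw [aFun, dampCoeff, show 2*q-1-1 = 2*q-2 by ring]
  ring

lemma dampCoeff_mul_eq (ht : 0 < t) :
    dampCoeff γ q s t * (c / (2 * t ^ p))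
      = c / 2 * t ^ (q+s-p) - c * γ * q / 2 * t ^ (q-1-p) := by
  rw [dampCoeff, rpow_sub ht (q+s) p, rpow_sub ht (q-1) p]
  ring

end Coefficients

section Asymptotics

variable {α q γ s c p : ℝ}

lemma eventually_coeff_bounds (hα : 1 < α) (hq1 : q < 1) (hc : 0 < c) (hs : 0 < s)
    (hps : p - 2 < s) :
    ∀ᶠ t : ℝ in atTop, 1 ≤ t ∧ 0 < dampCoeff γ q s t ∧ aFun α q γ s t ≤ 0
      ∧ q * (1 - q) / 2 * t ^ (q-2) ≤ dampCoeff γ q s t * (c / (2 * t ^ p)) := by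
  have hε : 0 < (α - 1) / 4 := by linarith
  have hc4 : 0 < c / 4 := by linarith
  filter_upwards [eventually_ge_atTop 1,
    eventually_mul_rpow_le_mul_rpow (γ * q) (show q - 1 < q + s by linarith) one_half_pos,
    eventually_mul_rpow_le_mul_rpow (2*q+s) (show 2*q+s-1 < q+s by linarith) hε,
    eventually_mul_rpow_le_mul_rpow (-(2*γ*q*(2*q-1))) (show 2*q-2 < q+s by linarith) hε,
    eventually_mul_rpow_le_mul_rpow (α * (γ * q)) (show q-1 < q+s by linarith) hε,
    eventually_mul_rpow_le_mul_rpow (q * (1 - q) / 2) (show q-2 < q+s-p by linarith) hc4,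
    eventually_mul_rpow_le_mul_rpow (c * γ * q / 2) (show q-1-p < q+s-p by linarith) hc4]
    with t ht1 hD h1 h2 h3 h4 h5
  have ht : 0 < t := one_pos.trans_le ht1
  have hpos : 0 < t ^ (q + s) := rpow_pos_of_pos ht _
  refine ⟨ht1, ?_, ?_, ?_⟩
  · rw [dampCoeff]; linarith
  · rw [aFun]
    linear_combination h1 + h2 + h3 + mul_pos hε hpos
  · rw [dampCoeff_mul_eq ht]; linarith

end Asymptotics

section Component

variable {E : Type*} [NormedAddCommGroup E] [InnerProductSpace ℝ E] {α q γ s t : ℝ}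
  {w w' w'' G : ℝ → E} {w₀ G' : E}

lemma hasDerivAt_momentum (ht : 0 < t) (hw : HasDerivAt w (w' t) t)
    (hw' : HasDerivAt w' (w'' t) t) (hG : HasDerivAt G G' t)
    (hode : w'' t + (α / t ^ q) • w' t + γ • G' + t ^ s • G t = 0) :
    HasDerivAt (fun τ => (α - 1) • (w τ - w₀) + τ ^ q • (w' τ + γ • G τ))
      ((q * t ^ (q-1) - 1) • w' t - dampCoeff γ q s t • G t) t := by
  have hq : HasDerivAt (fun τ : ℝ => τ ^ q) (q * t ^ (q - 1)) t :=
    hasDerivAt_rpow_const (Or.inl ht.ne')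
  refine (((hw.sub_const w₀).const_smul (α - 1)).add
    (hq.smul (hw'.add (hG.const_smul γ)))).congr_deriv ?_
  have e1 : t ^ q * (α / t ^ q) = α := mul_div_cancel₀ _ (rpow_pos_of_pos ht q).ne'
  have e2 : t ^ q * t ^ s = t ^ (q + s) := (rpow_add ht q s).symm
  rw [dampCoeff, Pi.add_apply, Pi.smul_apply]
  linear_combination (norm := module) t ^ q • hode - e1 • w' t - e2 • G t

lemma hasDerivAt_componentEnergy (ht : 0 < t) (hw : HasDerivAt w (w' t) t)
    (hw' : HasDerivAt w' (w'' t) t) (hG : HasDerivAt G G' t)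
    (hode : w'' t + (α / t ^ q) • w' t + γ • G' + t ^ s • G t = 0) :
    HasDerivAt (fun τ => 1/2 * ‖(α - 1) • (w τ - w₀) + τ ^ q • (w' τ + γ • G τ)‖ ^ 2
        + (α - 1)/2 * (1 - q * τ ^ (q-1)) * ‖w τ - w₀‖ ^ 2)
      ((α - 1) * (q * (1 - q) / 2 * t ^ (q-2)) * ‖w t - w₀‖ ^ 2
        - (α - 1) * dampCoeff γ q s t * ⟪w t - w₀, G t⟫ - gapCoeff γ q s t * ⟪w' t, G t⟫
        - (1 - q * t ^ (q-1)) * t ^ q * ‖w' t‖ ^ 2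
        - γ * t ^ q * dampCoeff γ q s t * ‖G t‖ ^ 2) t := by
  have hweight : HasDerivAt (fun τ : ℝ => (α - 1)/2 * (1 - q * τ ^ (q-1)))
      ((α - 1)/2 * -(q * ((q - 1) * t ^ (q - 1 - 1)))) t :=
    (((hasDerivAt_rpow_const (Or.inl ht.ne')).const_mul q).const_sub 1).const_mul _
  refine (((hasDerivAt_momentum ht hw hw' hG hode).norm_sq.const_mul (1/2)).add
    (hweight.mul (hw.sub_const w₀).norm_sq)).congr_deriv ?_
  rw [gapCoeff_eq ht, show q - 1 - 1 = q - 2 by ring]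
  simp only [inner_add_left, inner_sub_left, inner_sub_right, real_inner_smul_left,
    real_inner_smul_right, real_inner_self_eq_norm_sq, real_inner_comm (w' t) (G t)]
  ring

end Component

lemma hasDerivAt_const_div_two_mul_rpow (c : ℝ) {p t : ℝ} (ht : 0 < t) :
    HasDerivAt (fun τ : ℝ => c / (2 * τ ^ p)) (-(p / t) * (c / (2 * t ^ p))) t := by
  have htp : 2 * t ^ p ≠ 0 := by positivity
  refine ((hasDerivAt_const t c).div ((hasDerivAt_rpow_const (Or.inl ht.ne')).const_mul 2)
    htp).congr_deriv ?_
  rw [rpow_sub_one ht.ne']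
  field_simp
  ring

section Lagrangian

variable {n m : ℕ} {f : Euc n → ℝ} {g : Euc m → ℝ} {K : Euc n →L[ℝ] Euc m} {c p t : ℝ}
  {xs : Euc n} {ys : Euc m}

lemma hasDerivAt_lag_sub_lag {x : ℝ → Euc n} {y : ℝ → Euc m} {x' : Euc n} {y' : Euc m}
    (hf : DifferentiableAt ℝ f (x t)) (hg : DifferentiableAt ℝ g (y t))
    (hx : HasDerivAt x x' t) (hy : HasDerivAt y y' t) :
    HasDerivAt (fun τ => Lag f g K (x τ) ys - Lag f g K xs (y τ))
      (⟪gradient f (x t), x'⟫ + ⟪K x', ys⟫ - ⟪K xs, y'⟫ + ⟪gradient g (y t), y'⟫) t := by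
  have hfx : HasDerivAt (fun τ => f (x τ)) ⟪gradient f (x t), x'⟫ t := by
    simpa only [Function.comp_def, InnerProductSpace.toDual_apply_apply] using
      hf.hasGradientAt.hasFDerivAt.comp_hasDerivAt t hx
  have hgy : HasDerivAt (fun τ => g (y τ)) ⟪gradient g (y t), y'⟫ t := by
    simpa only [Function.comp_def, InnerProductSpace.toDual_apply_apply] using
      hg.hasGradientAt.hasFDerivAt.comp_hasDerivAt t hy
  have hKx := (K.hasFDerivAt.comp_hasDerivAt t hx).inner ℝ (hasDerivAt_const t ys)
  have hKy := (hasDerivAt_const t (K xs)).inner ℝ hy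
  refine ((((hfx.add hKx).sub_const (g ys)).sub
    ((hKy.const_add (f xs)).sub hgy))).congr_deriv ?_
  simp only [inner_gradient_left, Function.comp_apply, inner_zero_right, zero_add,
    inner_zero_left, add_zero]
  ring

lemma inner_gradLx_sub_inner_gradLy {θ l A : ℝ} (hθ : l * θ = A)
    (x x' : Euc n) (y y' : Euc m) :
    l * (⟪x - xs, gradLx f K c p t x (y + θ • y')⟫ - ⟪y - ys, gradLy g K c p t (x + θ • x') y⟫)
      + A * (⟪x', gradLx f K c p t x (y + θ • y')⟫ - ⟪y', gradLy g K c p t (x + θ • x') y⟫)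
    = l * (Lag f g K x ys - Lag f g K xs y + bregmanDiv f x xs + bregmanDiv g y ys
        + c / (2 * t ^ p) * (‖x‖ ^ 2 + ‖y‖ ^ 2 + ‖x - xs‖ ^ 2 + ‖y - ys‖ ^ 2
          - ‖xs‖ ^ 2 - ‖ys‖ ^ 2))
      + A * (⟪gradient f x, x'⟫ + ⟪K x', ys⟫ - ⟪K xs, y'⟫ + ⟪gradient g y, y'⟫
        + c / (2 * t ^ p) * (2 * ⟪x, x'⟫ + 2 * ⟪y, y'⟫)) := by
  simp only [gradLx, gradLy, Lag, bregmanDiv, ← real_inner_self_eq_norm_sq, map_add, map_sub,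
    map_smul, inner_add_right, inner_sub_left, inner_sub_right, inner_neg_right,
    real_inner_smul_right, ContinuousLinearMap.adjoint_inner_right]
  simp only [real_inner_comm xs x, real_inner_comm x' x, real_inner_comm ys y,
    real_inner_comm y' y,
    real_inner_comm (gradient f x) x', real_inner_comm (gradient f x) x,
    real_inner_comm (gradient f x) xs, real_inner_comm (gradient g y) y',
    real_inner_comm (gradient g y) y, real_inner_comm (gradient g y) ys,
    real_inner_comm (K x) y, real_inner_comm (K x) ys, real_inner_comm (K x) y',
    real_inner_comm (K x') y, real_inner_comm (K x') ys, real_inner_comm (K x') y']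
  linear_combination (⟪K x, y'⟫ - ⟪K xs, y'⟫ - ⟪K x', y⟫ + ⟪K x', ys⟫) * hθ

end Lagrangian

section Energy

def energyRate {n m : ℕ} (f : Euc n → ℝ) (g : Euc m → ℝ) (K : Euc n →L[ℝ] Euc m)
    (c p α q γ s : ℝ) (xs : Euc n) (ys : Euc m)
    (x x' : ℝ → Euc n) (y y' : ℝ → Euc m) (t : ℝ) : ℝ :=
  aFun α q γ s t * (Lag f g K (x t) ys - Lag f g K xs (y t)
      + c / (2 * t ^ p) * (‖x t‖ ^ 2 + ‖y t‖ ^ 2))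
    - p / t * gapCoeff γ q s t * (c / (2 * t ^ p)) * (‖x t‖ ^ 2 + ‖y t‖ ^ 2)
    + (α - 1) * (q * (1 - q) / 2 * t ^ (q-2) - dampCoeff γ q s t * (c / (2 * t ^ p)))
      * (‖x t - xs‖ ^ 2 + ‖y t - ys‖ ^ 2)
    + (α - 1) * dampCoeff γ q s t * (c / (2 * t ^ p)) * (‖xs‖ ^ 2 + ‖ys‖ ^ 2)
    - (α - 1) * dampCoeff γ q s t * (bregmanDiv f (x t) xs + bregmanDiv g (y t) ys)
    - (1 - q * t ^ (q-1)) * t ^ q * (‖x' t‖ ^ 2 + ‖y' t‖ ^ 2)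
    - γ * t ^ q * dampCoeff γ q s t * DeltaFun f g K c p α q γ s x x' y y' t

variable {n m : ℕ} {f : Euc n → ℝ} {g : Euc m → ℝ} {K : Euc n →L[ℝ] Euc m}
  {c p α q γ s t₀ t : ℝ} {x : ℝ → Euc n} {y : ℝ → Euc m}
  {x' x'' Gx' : ℝ → Euc n} {y' y'' Gy' : ℝ → Euc m} {xs : Euc n} {ys : Euc m}

lemma hasDerivAt_Efun (hsol : IsDynSol f g K c p α q γ s t₀ x y x' x'' Gx' y' y'' Gy')
    (hf : DifferentiableAt ℝ f (x t)) (hg : DifferentiableAt ℝ g (y t))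
    (hα : 1 < α) (ht₀ : t₀ ≤ t) (ht : 0 < t) (hD : dampCoeff γ q s t ≠ 0) :
    HasDerivAt (Efun f g K c p α q γ s xs ys x x' y y')
      (energyRate f g K c p α q γ s xs ys x x' y y' t) t := by
  have hx := hsol.hx' t ht₀
  have hy := hsol.hy' t ht₀
  have hX := hasDerivAt_componentEnergy (w₀ := xs) ht hx (hsol.hx'' t ht₀) (hsol.hGx' t ht₀)
    (hsol.heqx t ht₀)
  -- the `y`-component is a component with `G = -∇_y L_t`
  have hY := hasDerivAt_componentEnergy (α := α) (q := q) (γ := γ) (s := s) (w₀ := ys) ht hy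
    (hsol.hy'' t ht₀) (hsol.hGy' t ht₀).fun_neg
    (by simpa only [smul_neg, ← sub_eq_add_neg] using hsol.heqy t ht₀)
  have hgap := hasDerivAt_lag_sub_lag (K := K) (xs := xs) (ys := ys) hf hg hx hy
  have hcoupling := inner_gradLx_sub_inner_gradLy (f := f) (g := g) (K := K) (c := c) (p := p)
    (t := t) (xs := xs) (ys := ys) (mul_dampCoeff_mul_theta hα hD) (x t) (x' t) (y t) (y' t)
  have hE : Efun f g K c p α q γ s xs ys x x' y y' = fun τ =>
      gapCoeff γ q s τ * (Lag f g K (x τ) ys - Lag f g K xs (y τ)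
        + c / (2 * τ ^ p) * (‖x τ‖ ^ 2 + ‖y τ‖ ^ 2))
      + (1/2 * ‖(α - 1) • (x τ - xs)
            + τ ^ q • (x' τ + γ • gradLx f K c p τ (x τ) (y τ + theta α q γ s τ • y' τ))‖ ^ 2
        + (α - 1)/2 * (1 - q * τ ^ (q-1)) * ‖x τ - xs‖ ^ 2)
      + (1/2 * ‖(α - 1) • (y τ - ys)
            + τ ^ q • (y' τ + γ • -gradLy g K c p τ (x τ + theta α q γ s τ • x' τ) (y τ))‖ ^ 2
        + (α - 1)/2 * (1 - q * τ ^ (q-1)) * ‖y τ - ys‖ ^ 2) := by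
    funext τ
    rw [Efun, gapCoeff, smul_neg, ← sub_eq_add_neg]
    ring
  rw [hE]
  have hweighted := (hasDerivAt_gapCoeff (α := α) (γ := γ) (q := q) (s := s) ht).mul
    (hgap.add ((hasDerivAt_const_div_two_mul_rpow c (p := p) ht).mul (hx.norm_sq.add hy.norm_sq)))
  refine ((hweighted.add hX).add hY).congr_deriv ?_
  simp only [energyRate, DeltaFun, norm_neg, inner_neg_right, Pi.add_apply, Pi.mul_apply]
  linear_combination -hcoupling

lemma energyRate_le (hf : DifferentiableAt ℝ f (x t)) (hg : DifferentiableAt ℝ g (y t))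
    (hfc : ConvexOn ℝ univ f) (hgc : ConvexOn ℝ univ g) (hsad : IsSaddle (Lag f g K) xs ys)
    (hc : 0 < c) (hp : 0 < p) (hα : 1 < α) (hq0 : 0 < q) (hq1 : q < 1) (hγ : 0 < γ)
    (ht : 1 ≤ t) (hD : 0 < dampCoeff γ q s t) (ha : aFun α q γ s t ≤ 0)
    (hl : q * (1 - q) / 2 * t ^ (q-2) ≤ dampCoeff γ q s t * (c / (2 * t ^ p))) :
    energyRate f g K c p α q γ s xs ys x x' y y' t
      ≤ (α - 1) * c / 2 * t ^ (q+s-p) * (‖xs‖ ^ 2 + ‖ys‖ ^ 2) := by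
  have ht0 : 0 < t := one_pos.trans_le ht
  have hα1 : 0 < α - 1 := sub_pos.2 hα
  have hκ : 0 ≤ 1 - q * t ^ (q-1) := by
    have := rpow_le_one_of_one_le_of_nonpos ht (by linarith : q - 1 ≤ 0)
    nlinarith
  have hgap : 0 ≤ Lag f g K (x t) ys - Lag f g K xs (y t)
      + c / (2 * t ^ p) * (‖x t‖ ^ 2 + ‖y t‖ ^ 2) :=
    add_nonneg (hsad.lag_sub_lag_nonneg _ _) (by positivity)
  have hA : 0 ≤ gapCoeff γ q s t := by
    rw [gapCoeff_eq ht0]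
    have := rpow_pos_of_pos ht0 q
    positivity
  have hbregman := add_nonneg (hfc.bregmanDiv_nonneg hf xs) (hgc.bregmanDiv_nonneg hg ys)
  have hΔ : 0 ≤ DeltaFun f g K c p α q γ s x x' y y' t := by rw [DeltaFun]; positivity
  have hDr : dampCoeff γ q s t * (c / (2 * t ^ p)) ≤ c / 2 * t ^ (q+s-p) := by
    rw [dampCoeff_mul_eq ht0]
    have : 0 ≤ c * γ * q / 2 * t ^ (q-1-p) := by positivity
    linarith
  have htq := rpow_pos_of_pos ht0 q
  have hr : 0 ≤ c / (2 * t ^ p) := by positivity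
  rw [energyRate]
  linarith [mul_nonpos_of_nonpos_of_nonneg ha hgap,
    mul_nonneg (mul_nonneg (mul_nonneg (div_nonneg hp.le ht0.le) hA) hr)
      (by positivity : (0:ℝ) ≤ ‖x t‖ ^ 2 + ‖y t‖ ^ 2),
    mul_nonneg hα1.le (mul_nonneg (sub_nonneg.2 hl)
      (by positivity : (0:ℝ) ≤ ‖x t - xs‖ ^ 2 + ‖y t - ys‖ ^ 2)),
    mul_le_mul_of_nonneg_right (mul_le_mul_of_nonneg_left hDr hα1.le)
      (by positivity : (0:ℝ) ≤ ‖xs‖ ^ 2 + ‖ys‖ ^ 2),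
    mul_nonneg (mul_nonneg hα1.le hD.le) hbregman,
    mul_nonneg (mul_nonneg hκ htq.le) (by positivity : (0:ℝ) ≤ ‖x' t‖ ^ 2 + ‖y' t‖ ^ 2),
    mul_nonneg (mul_nonneg (mul_nonneg hγ.le htq.le) hD.le) hΔ]

end Energy

theorem stmt14_general
    {n m : ℕ}
    (f : Euc n → ℝ) (g : Euc m → ℝ) (K : Euc n →L[ℝ] Euc m)
    (hf : ContDiff ℝ 2 f) (hg : ContDiff ℝ 2 g)
    (hfc : ConvexOn ℝ Set.univ f) (hgc : ConvexOn ℝ Set.univ g)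
    (c p α q γ s t₀ : ℝ)
    (hc : 0 < c) (hp : 0 < p) (hα : 1 < α) (hq0 : 0 < q) (hq1 : q < 1)
    (hγ : 0 < γ) (hs : 0 < s)
    (x : ℝ → Euc n) (y : ℝ → Euc m)
    (x' x'' Gx' : ℝ → Euc n) (y' y'' Gy' : ℝ → Euc m)
    (hsol : IsDynSol f g K c p α q γ s t₀ x y x' x'' Gx' y' y'' Gy')
    (xs : Euc n) (ys : Euc m) (hsad : IsSaddle (Lag f g K) xs ys)
    (hsge : s > max 0 (p - 2))
    (E' : ℝ → ℝ)
    (hE' : ∀ t ≥ t₀, HasDerivAt (Efun f g K c p α q γ s xs ys x x' y y') (E' t) t) :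
    ∃ t₄ ≥ t₀, ∀ t ≥ t₄,
      E' t ≤ (α - 1) * c / 2 * t ^ (q+s-p) * (‖xs‖ ^ 2 + ‖ys‖ ^ 2) := by
  obtain ⟨t₁, ht₁⟩ := eventually_atTop.mp
    (eventually_coeff_bounds (γ := γ) hα hq1 hc hs ((le_max_right _ _).trans_lt hsge))
  refine ⟨max t₀ t₁, le_max_left _ _, fun t ht => ?_⟩
  obtain ⟨ht1, hD, ha, hl⟩ := ht₁ t (le_of_max_le_right ht)
  have ht₀ : t₀ ≤ t := le_of_max_le_left ht
  have hfx := hf.differentiable two_ne_zero (x t)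
  have hgy := hg.differentiable two_ne_zero (y t)
  rw [(hE' t ht₀).unique (hasDerivAt_Efun hsol hfx hgy hα ht₀ (one_pos.trans_le ht1) hD.ne')]
  exact energyRate_le hfx hgy hfc hgc hsad hc hp hα hq0 hq1 hγ ht1 hD ha hl

/-- the derivative bound for the energy `E` of Theorem 3.1. -/
theorem stmt14
    {n m : ℕ}
    (f : Euc n → ℝ) (g : Euc m → ℝ) (K : Euc n →L[ℝ] Euc m)
    (hf : ContDiff ℝ 2 f) (hg : ContDiff ℝ 2 g)
    (hfc : ConvexOn ℝ Set.univ f) (hgc : ConvexOn ℝ Set.univ g)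
    (hΩ : ∃ z : Euc n × Euc m, IsSaddle (Lag f g K) z.1 z.2)
    (c p α q γ s t₀ : ℝ)
    (hc : 0 < c) (hp : 0 < p) (hα : 1 < α) (hq0 : 0 < q) (hq1 : q < 1)
    (hγ : 0 < γ) (hs : 0 < s) (ht₀ : (γ * q) ^ (1 / (s + 1)) < t₀)
    (x : ℝ → Euc n) (y : ℝ → Euc m)
    (x' x'' Gx' : ℝ → Euc n) (y' y'' Gy' : ℝ → Euc m)
    (hsol : IsDynSol f g K c p α q γ s t₀ x y x' x'' Gx' y' y'' Gy')
    (xs : Euc n) (ys : Euc m) (hsad : IsSaddle (Lag f g K) xs ys)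
    (hsge : s > max 0 (p - 2))
    (E' : ℝ → ℝ)
    (hE' : ∀ t ≥ t₀, HasDerivAt (Efun f g K c p α q γ s xs ys x x' y y') (E' t) t) :
    ∃ t₄ ≥ t₀, ∀ t ≥ t₄,
      E' t ≤ (α - 1) * c / 2 * t ^ (q+s-p) * (‖xs‖ ^ 2 + ‖ys‖ ^ 2) :=
  stmt14_general f g K hf hg hfc hgc c p α q γ s t₀ hc hp hα hq0 hq1 hγ hs x y x' x'' Gx' y' y'' Gy'
    hsol xs ys hsad hsge E' hE'
end
end

section
/- Fix t > 0 and let (x_t, y_t) be the unique saddle point of L_t. Then for every u ∈ ℝ^n, v ∈ ℝ^m and every (x̄*, ȳ*) ∈ Ω, one has L(u, ȳ*) − L(x̄*, v) ≤ L_t(u, y_t) − L_t(x_t, v) + (c/(2t^p))(‖x̄*‖² + ‖ȳ*‖²) + ‖K‖·(‖u − x_t‖·‖y_t − ȳ*‖ + ‖x_t − x̄*‖·‖v − y_t‖). -/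
open Real Set Filter MeasureTheory
open scoped RealInnerProductSpace

noncomputable section

/-- comparison of the primal-dual gap of `L` with that of `L_t`. -/
theorem stmt17
    {n m : ℕ}
    (f : Euc n → ℝ) (g : Euc m → ℝ) (K : Euc n →L[ℝ] Euc m)
    (hf : ContDiff ℝ 2 f) (hg : ContDiff ℝ 2 g)
    (hfc : ConvexOn ℝ Set.univ f) (hgc : ConvexOn ℝ Set.univ g)
    (c p t : ℝ) (hc : 0 < c) (hp : 0 < p) (ht : 0 < t)
    (xt : Euc n) (yt : Euc m) (hsad : IsSaddle (LagT f g K c p t) xt yt)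
    (u : Euc n) (v : Euc m) (xb : Euc n) (yb : Euc m)
    (hb : IsSaddle (Lag f g K) xb yb) :
    Lag f g K u yb - Lag f g K xb v ≤
      LagT f g K c p t u yt - LagT f g K c p t xt v
        + c / (2 * t ^ p) * (‖xb‖ ^ 2 + ‖yb‖ ^ 2)
        + ‖K‖ * (‖u - xt‖ * ‖yt - yb‖ + ‖xt - xb‖ * ‖v - yt‖) := by
  have h1 : LagT f g K c p t xt yb ≤ LagT f g K c p t xt yt := (hsad xb yb).1
  have h2 : LagT f g K c p t xt yt ≤ LagT f g K c p t xb yt := (hsad xb yb).2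
  have hk : 0 < c / (2 * t ^ p) := by positivity
  have hnn : 0 ≤ c / (2 * t ^ p) * (‖u‖ ^ 2 + ‖v‖ ^ 2) := by positivity
  have hCS1 : ⟪K u - K xt, yb - yt⟫ ≤ ‖K‖ * (‖u - xt‖ * ‖yt - yb‖) := by
    calc ⟪K u - K xt, yb - yt⟫ ≤ ‖K u - K xt‖ * ‖yb - yt‖ := real_inner_le_norm _ _
    _ ≤ ‖K‖ * ‖u - xt‖ * ‖yb - yt‖ := by
        have : ‖K u - K xt‖ = ‖K (u - xt)‖ := by rw [map_sub]
        rw [this]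
        exact mul_le_mul_of_nonneg_right (K.le_opNorm _) (norm_nonneg _)
    _ = ‖K‖ * (‖u - xt‖ * ‖yt - yb‖) := by rw [norm_sub_rev yb yt]; ring
  have hCS2 : ⟪K xt - K xb, v - yt⟫ ≤ ‖K‖ * (‖xt - xb‖ * ‖v - yt‖) := by
    calc ⟪K xt - K xb, v - yt⟫ ≤ ‖K xt - K xb‖ * ‖v - yt‖ := real_inner_le_norm _ _
    _ ≤ ‖K‖ * (‖xt - xb‖ * ‖v - yt‖) := by
        have : ‖K xt - K xb‖ = ‖K (xt - xb)‖ := by rw [map_sub]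
        rw [this, ← mul_assoc]
        exact mul_le_mul_of_nonneg_right (K.le_opNorm _) (norm_nonneg _)
  have e1 : ⟪K u, yb⟫ - ⟪K u, yt⟫ - ⟪K xt, yb⟫ + ⟪K xt, yt⟫ = ⟪K u - K xt, yb - yt⟫ := by
    simp [inner_sub_left, inner_sub_right]; ring
  have e2 : ⟪K xt, v⟫ - ⟪K xb, v⟫ - ⟪K xt, yt⟫ + ⟪K xb, yt⟫ = ⟪K xt - K xb, v - yt⟫ := by
    simp [inner_sub_left, inner_sub_right]; ring
  simp only [LagT, Lag] at h1 h2 ⊢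
  nlinarith [h1, h2, hCS1, hCS2, hnn, e1, e2, mul_pos hk (mul_pos hk hk)]
end
end

section
/- Let 0 < q < 1, M > 0, r ∈ ℝ and t₀ > 0. Then there exist T ≥ t₀ and C > 0 such that for all t ≥ T, ∫_{t₀}^{t} ω^{r} · e^{(M/(1−q))·ω^{1−q}} dω ≤ C · (1 + t^{r+q} · e^{(M/(1−q))·t^{1−q}}). -/
open Real Set Filter MeasureTheory
open scoped RealInnerProductSpace

noncomputable section

/-! With `c = M / (1 - q)`, the function `F t = t ^ (r + q) * exp (c * t ^ (1 - q))` has derivative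
`((r + q) * t ^ (q - 1) + M)` times the integrand, and `t ^ (q - 1) → 0`, so beyond some `T` the
integrand is at most `(2 / M) F'`. Hence `∫_T^t ≤ (2 / M) F t`, while `∫_{t₀}^T` is a constant. -/

theorem continuousOn_rpow_mul_exp_rpow (r b c : ℝ) :
    ContinuousOn (fun x : ℝ => x ^ r * exp (c * x ^ b)) (Ioi 0) := by
  intro x hx
  fun_prop (disch := exact Or.inl (ne_of_gt hx))

theorem hasDerivAt_rpow_mul_exp_rpow (r b c : ℝ) {x : ℝ} (hx : 0 < x) :
    HasDerivAt (fun x : ℝ => x ^ (r + 1 - b) * exp (c * x ^ b))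
      (((r + 1 - b) * x ^ (-b) + c * b) * (x ^ r * exp (c * x ^ b))) x := by
  have hpow (e : ℝ) : HasDerivAt (fun x : ℝ => x ^ e) (e * x ^ (e - 1)) x :=
    hasDerivAt_rpow_const (Or.inl hx.ne')
  refine ((hpow (r + 1 - b)).mul ((hpow b).const_mul c).exp).congr_deriv ?_
  have hsplit : x ^ (r + 1 - b - 1) = x ^ (-b) * x ^ r := by
    rw [← rpow_add hx]; ring_nf
  have hmerge : x ^ (r + 1 - b) * x ^ (b - 1) = x ^ r := by
    rw [← rpow_add hx]; ring_nf
  rw [hsplit, ← hmerge]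
  ring

theorem eventually_integral_rpow_mul_exp_rpow_le (r b c : ℝ) (hb : 0 < b) (hc : 0 < c) :
    ∀ᶠ T in atTop, ∀ t ≥ T,
      ∫ x in T..t, x ^ r * exp (c * x ^ b) ≤ 2 / (c * b) * (t ^ (r + 1 - b) * exp (c * t ^ b)) := by
  have hcb : 0 < c * b := mul_pos hc hb
  have hfactor : ∀ᶠ x in atTop, c * b / 2 ≤ (r + 1 - b) * x ^ (-b) + c * b := by
    have hlim : Tendsto (fun x : ℝ => (r + 1 - b) * x ^ (-b) + c * b) atTop (nhds (c * b)) := by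
      simpa using ((tendsto_rpow_neg_atTop hb).const_mul (r + 1 - b)).add_const (c * b)
    exact (hlim.eventually_const_lt (by linarith)).mono fun _ h => h.le
  obtain ⟨T₀, hT₀⟩ := eventually_atTop.mp (hfactor.and (eventually_gt_atTop 0))
  filter_upwards [eventually_ge_atTop T₀] with T hT t ht
  have hpos : ∀ x ∈ Icc T t, 0 < x := fun x hx => (hT₀ x (hT.trans hx.1)).2
  set F : ℝ → ℝ := fun x => 2 / (c * b) * (x ^ (r + 1 - b) * exp (c * x ^ b))
  have hF : ∀ x ∈ Icc T t, HasDerivAt F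
      (2 / (c * b) * (((r + 1 - b) * x ^ (-b) + c * b) * (x ^ r * exp (c * x ^ b)))) x :=
    fun x hx => (hasDerivAt_rpow_mul_exp_rpow r b c (hpos x hx)).const_mul _
  have hint := (continuousOn_rpow_mul_exp_rpow r b c).mono (fun x hx => hpos x hx)
  calc ∫ x in T..t, x ^ r * exp (c * x ^ b)
      ≤ F t - F T := by
        refine intervalIntegral.integral_le_sub_of_hasDeriv_right_of_le ht
          (fun x hx => (hF x hx).continuousAt.continuousWithinAt)
          (fun x hx => (hF x (Ioo_subset_Icc_self hx)).hasDerivWithinAt)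
          hint.integrableOn_Icc fun x hx => ?_
        have hx := Ioo_subset_Icc_self hx
        have hg : 0 ≤ x ^ r * exp (c * x ^ b) := by
          have := hpos x hx; positivity
        calc x ^ r * exp (c * x ^ b)
            = 2 / (c * b) * (c * b / 2 * (x ^ r * exp (c * x ^ b))) := by field_simp
          _ ≤ _ := by gcongr; exact (hT₀ x (hT.trans hx.1)).1
    _ ≤ F t := by
        have := hpos T ⟨le_rfl, ht⟩
        simp only [F, sub_le_self_iff]; positivity

theorem stmt19_general (q M r t₀ : ℝ) (hq1 : q < 1) (hM : 0 < M) (ht₀ : 0 < t₀) :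
    ∃ T ≥ t₀, ∃ C > 0, ∀ t ≥ T,
      (∫ ω in t₀..t, ω ^ r * Real.exp (M / (1 - q) * ω ^ (1 - q))) ≤
        C * (1 + t ^ (r + q) * Real.exp (M / (1 - q) * t ^ (1 - q))) := by
  have h1q : 0 < 1 - q := by linarith
  obtain ⟨T, hT, hTt₀⟩ := ((eventually_integral_rpow_mul_exp_rpow_le r (1 - q) (M / (1 - q)) h1q
    (by positivity)).and (eventually_ge_atTop t₀)).exists
  set g : ℝ → ℝ := fun ω => ω ^ r * exp (M / (1 - q) * ω ^ (1 - q))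
  have hg {a b : ℝ} (ha : t₀ ≤ a) (hab : a ≤ b) : IntervalIntegrable g volume a b :=
    ((continuousOn_rpow_mul_exp_rpow r (1 - q) (M / (1 - q))).mono fun x hx =>
      ht₀.trans_le (ha.trans (uIcc_of_le hab ▸ hx).1)).intervalIntegrable
  set A := ∫ ω in t₀..T, g ω
  have hA : 0 ≤ A := intervalIntegral.integral_nonneg hTt₀ fun ω hω => by
    have := ht₀.trans_le hω.1; positivity
  refine ⟨T, hTt₀, A + 2 / M + 1, by positivity, fun t ht => ?_⟩
  set F := t ^ (r + q) * exp (M / (1 - q) * t ^ (1 - q))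
  have hF : 0 ≤ F := by
    have := ht₀.trans_le (hTt₀.trans ht); positivity
  have htail : ∫ ω in T..t, g ω ≤ 2 / M * F := by
    simpa only [div_mul_cancel₀ M h1q.ne', show r + 1 - (1 - q) = r + q by ring] using hT t ht
  calc ∫ ω in t₀..t, g ω
      = A + ∫ ω in T..t, g ω :=
        (intervalIntegral.integral_add_adjacent_intervals (hg le_rfl hTt₀) (hg hTt₀ ht)).symm
    _ ≤ A + 2 / M * F := by gcongr
    _ ≤ (A + 2 / M + 1) * (1 + F) := by nlinarith [mul_nonneg hA hF, div_pos two_pos hM]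

/-- the integral estimate
`∫_{t₀}^t ω^r e^{(M/(1−q)) ω^{1−q}} dω ≤ C (1 + t^{r+q} e^{(M/(1−q)) t^{1−q}})`. -/
theorem stmt19 (q M r t₀ : ℝ) (hq0 : 0 < q) (hq1 : q < 1) (hM : 0 < M) (ht₀ : 0 < t₀) :
    ∃ T ≥ t₀, ∃ C > 0, ∀ t ≥ T,
      (∫ ω in t₀..t, ω ^ r * Real.exp (M / (1 - q) * ω ^ (1 - q))) ≤
        C * (1 + t ^ (r + q) * Real.exp (M / (1 - q) * t ^ (1 - q))) :=
  stmt19_general q M r t₀ hq1 hM ht₀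
end
end
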